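/- Let $t_0,t_1,t_2$ be pairwise distinct elements of a field and let $g, k_1, k_2$ be integers. Set $x = t_0 - t_1$, $y = t_0 - t_2$, $z = t_2 - t_1$. Then $x^{g-k_1-1} y^{g-k_2-1}\left( -\frac{(k_2+2-2g)z + (k_1-k_2)y}{y^2 z^2} + \frac{(k_1+2-2g)z - (k_2-k_1)x}{x^2 z^2} \right) = x^{g-k_1-3} y^{g-k_2-3}\big((4g-4-k_1-k_2)t_0 - (2g-2-k_2)t_1 - (2g-2-k_1)t_2\big)$, interpreting negative exponents as inverses in the field. -/

import Mathlib

/-!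
Write `a = 2g - 2 - k₂`, `b = 2g - 2 - k₁`. Since `x = y + z`, clearing the denominator
`x²y²z²` turns the sum of the two fixed-point contributions into the polynomial identity
`a x² z - (a - b) x² y - b y² z + (a - b) x y² = z² (a x + b y)`, and `a x + b y` is exactly the
linear form `(a + b) t₀ - a t₁ - b t₂` on the right. The factor `z²` cancels, which is why the
poles along `t₁ = t₂` disappear.
-/

theorem neg_div_add_div_eq_div_of_eq_add {F : Type*} [Field F] {x y z : F} (hx : x ≠ 0)
    (hy : y ≠ 0) (hz : z ≠ 0) (hxyz : x = y + z) (a b : F) :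
    -((-a * z + (a - b) * y) / (y ^ 2 * z ^ 2)) + (-b * z - (b - a) * x) / (x ^ 2 * z ^ 2)
      = (a * x + b * y) / (x ^ 2 * y ^ 2) := by
  field_simp
  subst hxyz
  ring

theorem zpow_add_two_mul_zpow_add_two_mul_div {F : Type*} [Field F] {x y : F} (hx : x ≠ 0)
    (hy : y ≠ 0) (m n : ℤ) (c : F) :
    x ^ (m + 2) * y ^ (n + 2) * (c / (x ^ 2 * y ^ 2)) = x ^ m * y ^ n * c := by
  rw [zpow_add₀ hx, zpow_add₀ hy]
  field_simp

theorem DT_rational_identity {F : Type*} [Field F] (t0 t1 t2 : F)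
    (h01 : t0 ≠ t1) (h02 : t0 ≠ t2) (h12 : t1 ≠ t2) (g k1 k2 : ℤ)
    (x y z : F) (hx : x = t0 - t1) (hy : y = t0 - t2) (hz : z = t2 - t1) :
    x ^ (g - k1 - 1) * y ^ (g - k2 - 1)
        * (-((((k2 + 2 - 2 * g : ℤ) : F) * z + ((k1 - k2 : ℤ) : F) * y) / (y ^ 2 * z ^ 2))
            + ((((k1 + 2 - 2 * g : ℤ) : F) * z - ((k2 - k1 : ℤ) : F) * x) / (x ^ 2 * z ^ 2)))
      = x ^ (g - k1 - 3) * y ^ (g - k2 - 3)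
          * (((4 * g - 4 - k1 - k2 : ℤ) : F) * t0 - ((2 * g - 2 - k2 : ℤ) : F) * t1
              - ((2 * g - 2 - k1 : ℤ) : F) * t2) := by
  have hx0 : x ≠ 0 := hx ▸ sub_ne_zero.mpr h01
  have hy0 : y ≠ 0 := hy ▸ sub_ne_zero.mpr h02
  have hz0 : z ≠ 0 := hz ▸ sub_ne_zero.mpr h12.symm
  set a : F := ((2 * g - 2 - k2 : ℤ) : F)
  set b : F := ((2 * g - 2 - k1 : ℤ) : F)
  have hlin : ((4 * g - 4 - k1 - k2 : ℤ) : F) * t0 - a * t1 - b * t2 = a * x + b * y := by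
    simp only [a, b, hx, hy]; push_cast; ring
  rw [show ((k2 + 2 - 2 * g : ℤ) : F) = -a by simp only [a]; push_cast; ring,
    show ((k1 - k2 : ℤ) : F) = a - b by simp only [a, b]; push_cast; ring,
    show ((k1 + 2 - 2 * g : ℤ) : F) = -b by simp only [b]; push_cast; ring,
    show ((k2 - k1 : ℤ) : F) = b - a by simp only [a, b]; push_cast; ring,
    neg_div_add_div_eq_div_of_eq_add hx0 hy0 hz0 (by rw [hx, hy, hz]; ring), hlin,
    show g - k1 - 1 = g - k1 - 3 + 2 by ring, show g - k2 - 1 = g - k2 - 3 + 2 by ring,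
    zpow_add_two_mul_zpow_add_two_mul_div hx0 hy0]
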